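/- Every tableau produced by Algorithm createTableau has the property that the target cell of every downwards pointer contains an upwards pointer; consequently, for every cell (i,j), findVertex(t(i,j)) is reached by following at most two nxt-pointers, and it is the cell holding the internal vertex identified with the j-th external vertex of the graph labeling the i-th node of the modeled derivation-tree path. -/

import Mathlib

/-! Formalization of SL HR grammars (straight-line hyperedge replacement grammars),
their derivation trees, traversal, and tableaux data structures. -/

universe u v

/-- A (hyper)graph over a label alphabet `L`: vertices and edges are natural numbers,
`att` gives the attachment sequence of an edge, `lab` its label, and `ext` is the
sequence of external vertices. -/
structure HRHypergraph (L : Type u) where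
  V : Finset ℕ
  E : Finset ℕ
  att : ℕ → List ℕ
  lab : ℕ → L
  ext : List ℕ

namespace HRHypergraph

variable {L : Type u}

/-- Well-formedness of a hypergraph with respect to a rank function on labels:
nonempty vertex set, attachments are repetition-free sequences of vertices of
length equal to the rank of the label (ranks are `≥ 1`), and the external
vertices form a repetition-free sequence of vertices. -/
def WF (rank : L → ℕ) (g : HRHypergraph L) : Prop :=
  g.V.Nonempty ∧
  (∀ e ∈ g.E, ∀ v ∈ g.att e, v ∈ g.V) ∧
  (∀ e ∈ g.E, (g.att e).Nodup) ∧
  (∀ e ∈ g.E, (g.att e).length = rank (g.lab e)) ∧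
  (∀ a : L, 1 ≤ rank a) ∧
  (∀ v ∈ g.ext, v ∈ g.V) ∧
  g.ext.Nodup

/-- The rank of a hypergraph is its number of external vertices. -/
def rank (g : HRHypergraph L) : ℕ := g.ext.length

/-- The vertex-numbered convention: a hypergraph with `n` vertices and `k` external
vertices has `V = {1,…,n}` and `ext = (n-k+1)⋯n`. -/
def VertexNumbered (g : HRHypergraph L) (n : ℕ) : Prop :=
  g.V = Finset.Icc 1 n ∧
  g.ext = (List.range g.ext.length).map (fun i => n - g.ext.length + 1 + i)

/-- A hypergraph is unique-labeled if for every vertex `x`, label `a` and position `i`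
there is at most one edge labeled `a` whose `i`-th attached vertex is `x`. -/
def UniqueLabeled (g : HRHypergraph L) : Prop :=
  ∀ (x : ℕ) (a : L) (i : ℕ), ∀ e₁ ∈ g.E, ∀ e₂ ∈ g.E,
    g.lab e₁ = a → g.lab e₂ = a →
    (g.att e₁)[i]? = some x → (g.att e₂)[i]? = some x → e₁ = e₂

/-- `x` and `y` are `a`-`k`-`l`-neighbors: some `a`-labeled edge has `x` attached
at position `k` and `y` attached at position `l` (positions are 0-based). -/
def Neighbors (g : HRHypergraph L) (a : L) (k l : ℕ) (x y : ℕ) : Prop :=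
  ∃ e ∈ g.E, g.lab e = a ∧ (g.att e)[k]? = some x ∧ (g.att e)[l]? = some y

/-- An isomorphism of hypergraphs. -/
structure Iso (g h : HRHypergraph L) where
  vmap : ℕ → ℕ
  emap : ℕ → ℕ
  vmap_bij : Set.BijOn vmap ↑g.V ↑h.V
  emap_bij : Set.BijOn emap ↑g.E ↑h.E
  att_map : ∀ e ∈ g.E, h.att (emap e) = (g.att e).map vmap
  lab_map : ∀ e ∈ g.E, h.lab (emap e) = g.lab e
  ext_map : h.ext = g.ext.map vmap

def Isomorphic (g h : HRHypergraph L) : Prop := Nonempty (Iso g h)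

/-- `res` is (an instance of) the replacement of edge `e` of `g` by (a disjoint copy of)
the graph `h`: `e` is deleted, a renamed copy of `h` is added, the `i`-th external
vertex of the copy is identified with the `i`-th attached vertex of `e`, and the
external vertices of the result are those of `g`. -/
def IsReplacement (g : HRHypergraph L) (e : ℕ) (h : HRHypergraph L) (res : HRHypergraph L) : Prop :=
  (g.att e).length = h.ext.length ∧
  ∃ (ρ : ℕ → ℕ) (η : ℕ → ℕ),
    Set.InjOn ρ ↑h.V ∧ Set.InjOn η ↑h.E ∧
    (∀ (i x : ℕ), h.ext[i]? = some x → (g.att e)[i]? = some (ρ x)) ∧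
    (∀ x ∈ h.V, x ∉ h.ext → ρ x ∉ g.V) ∧
    (∀ f ∈ h.E, η f ∉ g.E) ∧
    res.V = g.V ∪ h.V.image ρ ∧
    res.E = g.E.erase e ∪ h.E.image η ∧
    (∀ f ∈ g.E.erase e, res.att f = g.att f ∧ res.lab f = g.lab f) ∧
    (∀ f ∈ h.E, res.att (η f) = (h.att f).map ρ ∧ res.lab (η f) = h.lab f) ∧
    res.ext = g.ext

/-- The canonical vertex renaming used in vertex-numbered replacement:
the `i`-th external vertex of `h` is renamed to the `i`-th attached vertex of `e`,
every other (internal) vertex `x` of `h` is renamed to `n + x`. -/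
def renameVN (g : HRHypergraph L) (e : ℕ) (h : HRHypergraph L) (n : ℕ) (x : ℕ) : ℕ :=
  if x ∈ h.ext then (g.att e).getD (List.idxOf x h.ext) 0 else n + x

/-- A fresh edge identifier for `g`. -/
def freshE (g : HRHypergraph L) : ℕ := g.E.sup id + 1

/-- Vertex-numbered replacement `g[e/h]`, where `n` is the number of vertices of `g`:
internal vertices of the copy of `h` are renumbered consecutively from `n+1`. -/
def replaceVN (g : HRHypergraph L) (e : ℕ) (h : HRHypergraph L) (n : ℕ) : HRHypergraph L where
  V := g.V ∪ (h.V.filter (fun x => x ∉ h.ext)).image (fun x => n + x)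
  E := g.E.erase e ∪ h.E.image (fun f => freshE g + f)
  att := fun f => if f ∈ g.E.erase e then g.att f
    else (h.att (f - freshE g)).map (renameVN g e h n)
  lab := fun f => if f ∈ g.E.erase e then g.lab f else h.lab (f - freshE g)
  ext := g.ext

end HRHypergraph

/-- A hyperedge replacement grammar over terminal alphabet `σ` and nonterminal
alphabet `ν`: each symbol has a rank, each nonterminal `A` has exactly one rule
`A → rhs A`, and there is a start hypergraph. -/
structure HRG (σ : Type u) (ν : Type v) where
  rankT : σ → ℕ
  rankN : ν → ℕ
  rhs : ν → HRHypergraph (σ ⊕ ν)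
  start : HRHypergraph (σ ⊕ ν)

namespace HRG

variable {σ : Type u} {ν : Type v}

/-- The rank function on the combined label alphabet. -/
def rankL (G : HRG σ ν) : σ ⊕ ν → ℕ := Sum.elim G.rankT G.rankN

/-- The graph associated with a derivation-tree root: the start graph for `none`,
the right-hand side of `A` for `some A`. -/
def graphOf (G : HRG σ ν) : Option ν → HRHypergraph (σ ⊕ ν)
  | none => G.start
  | some A => G.rhs A

/-- The rank of a derivation-tree root (the start graph has rank 0). -/
def rankO (G : HRG σ ν) : Option ν → ℕ
  | none => 0
  | some A => G.rankN A

/-- Well-formedness of an HR grammar. -/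
def WF (G : HRG σ ν) : Prop :=
  (∀ a : σ, 1 ≤ G.rankT a) ∧ (∀ A : ν, 1 ≤ G.rankN A) ∧
  (∀ A : ν, (G.rhs A).WF G.rankL) ∧
  (∀ A : ν, (G.rhs A).ext.length = G.rankN A) ∧
  G.start.WF G.rankL ∧ G.start.ext = []

/-- `A₁ ≤_NT A₂`: some edge of `rhs A₁` is labeled by the nonterminal `A₂`. -/
def ntStep (G : HRG σ ν) (A B : ν) : Prop :=
  ∃ e ∈ (G.rhs A).E, (G.rhs A).lab e = Sum.inr B

/-- Some edge of the start graph is labeled by the nonterminal `B`. -/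
def startStep (G : HRG σ ν) (B : ν) : Prop :=
  ∃ e ∈ G.start.E, G.start.lab e = Sum.inr B

/-- Straight-line restriction: the nonterminal dependency relation is acyclic
(it admits a strictly decreasing rank into `ℕ`), and every nonterminal is
reachable from the start graph (the DAG is rooted at `S`). -/
def SL (G : HRG σ ν) : Prop :=
  (∃ d : ν → ℕ, ∀ A B : ν, G.ntStep A B → d B < d A) ∧
  (∀ B : ν, ∃ A : ν, G.startStep A ∧ Relation.ReflTransGen G.ntStep A B)

/-- One derivation step: replace some nonterminal edge by the right-hand side of
its rule. -/
def Derives (G : HRG σ ν) (g g' : HRHypergraph (σ ⊕ ν)) : Prop :=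
  ∃ e ∈ g.E, ∃ B : ν, g.lab e = Sum.inr B ∧ HRHypergraph.IsReplacement g e (G.rhs B) g'

/-- A graph all of whose edges are labeled by terminals. -/
def TerminalGraph (g : HRHypergraph (σ ⊕ ν)) : Prop :=
  ∀ e ∈ g.E, ∃ a : σ, g.lab e = Sum.inl a

/-- The language of `G`: all terminal-labeled graphs derivable from the start graph. -/
def Lang (G : HRG σ ν) : Set (HRHypergraph (σ ⊕ ν)) :=
  {g | Relation.ReflTransGen G.Derives G.start g ∧ TerminalGraph g}

/-- Lexicographic comparison of attachment sequences. -/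
def listLexLE : List ℕ → List ℕ → Bool
  | [], _ => true
  | _ :: _, [] => false
  | a :: as, b :: bs => if a < b then true else if b < a then false else listLexLE as bs

/-- The derivation order `≤_dt` on edges: lexicographic on attachment sequences,
ties broken by the fixed linear order on nonterminals. -/
def dtLE [LinearOrder ν] (g : HRHypergraph (σ ⊕ ν)) (e f : ℕ) : Bool :=
  if g.att e = g.att f then
    match g.lab e, g.lab f with
    | Sum.inr B, Sum.inr C => decide (B ≤ C)
    | _, _ => true
  else listLexLE (g.att e) (g.att f)

/-- The nonterminal edges of `g`, listed in the derivation order `≤_dt`. -/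
def ntEdgeList [LinearOrder ν] (g : HRHypergraph (σ ⊕ ν)) : List ℕ :=
  ((g.E.filter (fun e => (g.lab e).isRight = true)).sort (· ≤ ·)).mergeSort (dtLE g)

/-- Replace all nonterminal edges of `g`, in derivation order, by `val` of their
labels, using vertex-numbered replacement. -/
def expandVal (G : HRG σ ν) [LinearOrder ν] (val : ν → HRHypergraph (σ ⊕ ν))
    (g : HRHypergraph (σ ⊕ ν)) : HRHypergraph (σ ⊕ ν) :=
  (ntEdgeList g).foldl (fun acc e =>
    match acc.lab e with
    | Sum.inr B => HRHypergraph.replaceVN acc e (val B) acc.V.card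
    | Sum.inl _ => acc) g

/-- `val` is the family `(val A)_{A ∈ N}` defined by the straight-line grammar:
`val A` is obtained from `rhs A` by replacing all its nonterminal edges, in
derivation order, by the values of their labels. -/
def ValFamily (G : HRG σ ν) [LinearOrder ν] (val : ν → HRHypergraph (σ ⊕ ν)) : Prop :=
  ∀ A : ν, val A = G.expandVal val (G.rhs A)

/-- The number of internal vertices of `val A`. -/
def iNodes (val : ν → HRHypergraph (σ ⊕ ν)) (A : ν) : ℕ :=
  ((val A).V \ (val A).ext.toFinset).card

/-- The sequence of nonterminals labeling the derivation-tree nodes along the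
Dewey address `u` (children are numbered from 0 in derivation order), starting
from a root labeled by the graph `g`. `none` if the address is invalid. -/
def ntSeq (G : HRG σ ν) [LinearOrder ν] : HRHypergraph (σ ⊕ ν) → List ℕ → Option (List ν)
  | _, [] => some []
  | g, i :: u =>
    match (ntEdgeList g)[i]? with
    | some e =>
      match g.lab e with
      | Sum.inr B => (ntSeq G (G.rhs B) u).map (fun Bs => B :: Bs)
      | Sum.inl _ => none
    | none => none

/-- The graph `g_u` labeling the derivation-tree node at Dewey address `u`
(starting from a root labeled by `g`), if the address is valid. -/
def graphAt (G : HRG σ ν) [LinearOrder ν] : HRHypergraph (σ ⊕ ν) → List ℕ → Option (HRHypergraph (σ ⊕ ν))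
  | g, [] => some g
  | g, i :: u =>
    match (ntEdgeList g)[i]? with
    | some e =>
      match g.lab e with
      | Sum.inr B => graphAt G (G.rhs B) u
      | Sum.inl _ => none
    | none => none

/-- The nonterminal (or start, `none`) labeling the derivation-tree node at address
`u` in the derivation tree rooted at `root`. -/
def ntAtNode (G : HRG σ ν) [LinearOrder ν] (root : Option ν) (u : List ℕ) :
    Option (Option ν) :=
  (ntSeq G (G.graphOf root) u).map (fun Bs => (Bs.map some).getLastD root)

/-- `iN`-value of the label of edge `e` (0 for terminal labels). -/
def iNOf (iN : ν → ℕ) (g : HRHypergraph (σ ⊕ ν)) (e : ℕ) : ℕ :=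
  match g.lab e with
  | Sum.inr B => iN B
  | Sum.inl _ => 0

/-- `first(u)` relative to the derivation tree rooted at `g`, where `iN B` is the
number of internal vertices of `val B`:
`first(ε) = 0` and `first(v.i) = first(v) + |V_{g_v}| - |ext_{g_v}| + Σ_{j<i} iN(lab e_j)`. -/
def firstAux (G : HRG σ ν) [LinearOrder ν] (iN : ν → ℕ) :
    HRHypergraph (σ ⊕ ν) → List ℕ → ℕ
  | _, [] => 0
  | g, i :: u =>
    (g.V.card - g.ext.length + (((ntEdgeList g).take i).map (iNOf iN g)).sum) +
      (match (ntEdgeList g)[i]? with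
       | some e =>
         (match g.lab e with
          | Sum.inr B => firstAux G iN (G.rhs B) u
          | Sum.inl _ => 0)
       | none => 0)

/-- `TraverseRel G a k l g x u y` formalizes `traverse_{k,l}(A,x,a) = (u,y)` for the
rule with right-hand side `g`: either `g` itself contains an `a`-labeled edge with
`x` at position `k` and `y` at position `l` (then `u = ε`), or `x` is the `j`-th
attached vertex of the `i`-th nonterminal edge `e` of `g` and the traversal
continues from the `j`-th external vertex of `rhs (lab e)`. -/
inductive TraverseRel (G : HRG σ ν) [LinearOrder ν] (a : σ) (k l : ℕ) :
    HRHypergraph (σ ⊕ ν) → ℕ → List ℕ → ℕ → Prop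
  | base {g : HRHypergraph (σ ⊕ ν)} {x y e : ℕ}
      (he : e ∈ g.E) (hlab : g.lab e = Sum.inl a)
      (hk : (g.att e)[k]? = some x) (hl : (g.att e)[l]? = some y) :
      TraverseRel G a k l g x [] y
  | step {g : HRHypergraph (σ ⊕ ν)} {x i e : ℕ} {B : ν} {j z : ℕ} {v : List ℕ} {y : ℕ}
      (hi : (ntEdgeList g)[i]? = some e) (hB : g.lab e = Sum.inr B)
      (hx : (g.att e)[j]? = some x) (hz : (G.rhs B).ext[j]? = some z)
      (hrec : TraverseRel G a k l (G.rhs B) z v y) :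
      TraverseRel G a k l g x (i :: v) y

/-- `InternalRel G g0 u x v y` formalizes `internal(u,x) = (v,y)` in the derivation
tree rooted at `g0`: the vertex `x` of `g_u` is identified, through the chain of
external-vertex identifications of the derivation, with the internal vertex `y`
of `g_v` at the ancestor `v` of `u`. -/
inductive InternalRel (G : HRG σ ν) [LinearOrder ν] (g0 : HRHypergraph (σ ⊕ ν)) :
    List ℕ → ℕ → List ℕ → ℕ → Prop
  | refl {u : List ℕ} {x : ℕ} {g : HRHypergraph (σ ⊕ ν)}
      (hg : graphAt G g0 u = some g) (hx : x ∈ g.V) (hint : x ∉ g.ext) :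
      InternalRel G g0 u x u x
  | up {u : List ℕ} {i x j : ℕ} {g gc : HRHypergraph (σ ⊕ ν)} {e y : ℕ} {v : List ℕ} {z : ℕ}
      (hg : graphAt G g0 u = some g)
      (he : (ntEdgeList g)[i]? = some e)
      (hgc : graphAt G g0 (u ++ [i]) = some gc)
      (hx : gc.ext[j]? = some x) (hy : (g.att e)[j]? = some y)
      (hrec : InternalRel G g0 u y v z) :
      InternalRel G g0 (u ++ [i]) x v z

end HRG

/-- A tableau: a matrix of cells (each holding a pointer `nxt` and a vertex number
`vtx`), together with the column vectors `nt` and `first` and an offset.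
Rows and columns are 0-based; `nt i = none` denotes the start graph. -/
structure Tableau (ν : Type v) where
  rows : ℕ
  cols : ℕ
  nxt : ℕ → ℕ → Option (ℕ × ℕ)
  vtx : ℕ → ℕ → ℕ
  nt : ℕ → Option ν
  first : ℕ → ℕ
  off : ℕ

namespace Tableau

variable {ν : Type v}

/-- Following the `nxt` pointer of cell `(i,j)`, and one more pointer if the first
one is downwards (targets a row strictly below `i`). -/
def findVertex (t : Tableau ν) (i j : ℕ) : Option (ℕ × ℕ) :=
  match t.nxt i j with
  | none => none
  | some (i', j') => if i' ≤ i then some (i', j') else t.nxt i' j'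

/-- The cell of `t` redirected by `concat` for column `j`: the target of the
downwards pointer of the first-row cell `(0,j)`, if that pointer is downwards,
and `(0,j)` itself otherwise. -/
def downTarget (t : Tableau ν) (j : ℕ) : ℕ × ℕ :=
  match t.nxt 0 j with
  | some (i', j') => if 0 < i' then (i', j') else (0, j)
  | none => (0, j)

end Tableau

namespace HRG

variable {σ : Type u} {ν : Type v}

/-- The first `m` rows of the tableau `t` model the path from the root (labeled by
`graphOf root`) to the node `u` (with `m = |u| + 1`) of the derivation tree:
rows carry the correct nonterminals and (offset-adjusted) `first` values, and for
every external vertex of every row graph, `findVertex` reaches, in at most two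
pointer steps, the cell holding the internal vertex it is identified with
(a first-row cell with `vtx = 0` if no such vertex exists), and a pointer is
upwards iff no lower row shares its `findVertex` value. -/
def ModelsUpTo (G : HRG σ ν) [LinearOrder ν] (iN : ν → ℕ) (root : Option ν)
    (u : List ℕ) (t : Tableau ν) (m : ℕ) : Prop :=
  ∃ Bs : List ν, ntSeq G (G.graphOf root) u = some Bs ∧
    m = u.length + 1 ∧ m ≤ t.rows ∧
    (∀ i < m, t.nt i = (root :: Bs.map some).getD i root) ∧
    (∀ i < m, t.first i + t.off = firstAux G iN (G.graphOf root) (u.take i)) ∧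
    (∀ i < m, ∀ gi, graphAt G (G.graphOf root) (u.take i) = some gi →
      ∀ j y, gi.ext[j]? = some y →
        (∀ v z, InternalRel G (G.graphOf root) (u.take i) y v z →
          ∃ j', t.findVertex i j = some (v.length, j') ∧ t.vtx v.length j' = z) ∧
        ((¬ ∃ v z, InternalRel G (G.graphOf root) (u.take i) y v z) →
          ∃ j', t.findVertex i j = some (0, j') ∧ t.vtx 0 j' = 0) ∧
        ((∀ p ∈ t.nxt i j, p.1 ≤ i) ↔
          ¬ ∃ i' j', i < i' ∧ i' < m ∧ j' < t.cols ∧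
            t.findVertex i' j' = t.findVertex i j))

/-- The tableau `t` models the path from the root to the node `u` of the derivation
tree rooted at `graphOf root` (Definition of `tab(u)`): in addition to
`ModelsUpTo` for all rows, it has exactly `|u| + 1` rows, offset `0`, and all
out-of-range entries are `0`. -/
def Models (G : HRG σ ν) [LinearOrder ν] (iN : ν → ℕ) (root : Option ν)
    (u : List ℕ) (t : Tableau ν) : Prop :=
  ModelsUpTo G iN root u t (u.length + 1) ∧
  t.rows = u.length + 1 ∧ t.off = 0 ∧
  (∀ i j : ℕ, t.rows ≤ i ∨ t.cols ≤ j → t.nxt i j = none ∧ t.vtx i j = 0)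

/-- The one-row tableau `t_ε` for the root of the derivation tree of `root`:
every column `j < rank root` holds a self-loop (upwards) pointer, all other
entries are `0`. -/
def initTab (G : HRG σ ν) (root : Option ν) (κ : ℕ) : Tableau ν where
  rows := 1
  cols := κ
  nxt := fun a b => if a = 0 ∧ b < G.rankO root then some (0, b) else none
  vtx := fun _ _ => 0
  nt := fun _ => root
  first := fun _ => 0
  off := 0

/-- One step of Algorithm `createTableau`: extend the tableau `t`, which models a
path ending in a node labeled by nonterminal `B = nt (rows - 1)`, by a new bottom
row for the `l`-th child (the `l`-th nonterminal edge `e_l` of `rhs B`): for each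
`j < rank e_l`, with `x = att(e_l)[j]`, if `x` is internal then the new cell points
to the cell above which receives `vtx = x`; if `x` is the `j'`-th external vertex
of `rhs B` then the new cell takes over the pointer of cell `(rows-1, j')`, which
in turn points down to the new cell, and all pointers from higher rows targeting
`(rows-1, j')` are redirected to the new cell. -/
def extendTab (G : HRG σ ν) [LinearOrder ν] (iN : ν → ℕ) (t : Tableau ν) (l : ℕ) :
    Tableau ν :=
  let m := t.rows
  let g := G.graphOf (t.nt (m - 1))
  let es := ntEdgeList g
  let e := es.getD l 0
  let al := g.att e
  let isExtCol : ℕ → Bool := fun c =>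
    match g.ext[c]? with
    | some x => decide (x ∈ al)
    | none => false
  let newColOf : ℕ → ℕ := fun c =>
    match g.ext[c]? with
    | some x => List.idxOf x al
    | none => 0
  { rows := m + 1
    cols := t.cols
    nt := fun i => if i = m then
        (match g.lab e with
         | Sum.inr B => some B
         | Sum.inl _ => none)
      else t.nt i
    first := fun i => if i = m then
        t.first (m - 1) + g.V.card - g.ext.length + ((es.take l).map (iNOf iN g)).sum
      else t.first i
    off := t.off
    vtx := fun i j =>
      if i = m then 0
      else if i = m - 1 ∧ j < al.length ∧ al.getD j 0 ∉ g.ext then al.getD j 0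
      else t.vtx i j
    nxt := fun i j =>
      if i = m then
        (if j < al.length then
          (if al.getD j 0 ∈ g.ext then t.nxt (m - 1) (List.idxOf (al.getD j 0) g.ext)
           else some (m - 1, j))
         else none)
      else if i = m - 1 then
        (if isExtCol j then some (m, newColOf j) else t.nxt i j)
      else
        (match t.nxt i j with
         | some (i', c) => if i' = m - 1 ∧ isExtCol c then some (m, newColOf c) else some (i', c)
         | none => none) }

/-- Algorithm `createTableau`: the tableau for the node at address `u` of the
derivation tree rooted at `graphOf root`, built by starting from `initTab` and
extending one row per step along the path. -/
def createTableau (G : HRG σ ν) [LinearOrder ν] (iN : ν → ℕ) (κ : ℕ)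
    (root : Option ν) (u : List ℕ) : Tableau ν :=
  u.foldl (extendTab G iN) (initTab G root κ)

open Classical in
/-- Algorithm `concat` (as the resulting virtual tableau): concatenate `t₂`
(modeling a path in the derivation tree of the nonterminal at row `r` of `t₁`)
to row `r` of `t₁`; `kB` is the rank of that nonterminal. Rows `< r` are those
of `t₁`; rows `≥ r` come from `t₂`, with, for each column `j < kB`, the relevant
upwards pointer of `t₂` redirected to `findVertex(t₁(r,j))`, and with the
offset of `t₂` set to `t₁.off + t₁.first r`. -/
noncomputable def concatTab (t₂ t₁ : Tableau ν) (r kB : ℕ) : Tableau ν where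
  rows := r + t₂.rows
  cols := t₁.cols
  nt := fun i => if i < r then t₁.nt i else t₂.nt (i - r)
  first := fun i => if i < r then t₁.first i + t₁.off
    else t₂.first (i - r) + (t₁.off + t₁.first r)
  off := 0
  vtx := fun i j => if i < r then t₁.vtx i j else t₂.vtx (i - r) j
  nxt := fun i j =>
    if i < r then t₁.nxt i j
    else if h : ∃ j0, j0 < kB ∧ Tableau.downTarget t₂ j0 = (i - r, j) then
      t₁.findVertex r h.choose
    else (t₂.nxt (i - r) j).map (fun p => (p.1 + r, p.2))

end HRG

/-- The string graph with `N` consecutive `a`-labeled edges: vertices `1,…,N+1`,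
the `i`-th edge attached to `(i, i+1)`. -/
def pathGraph {L : Type u} (N : ℕ) (a : L) : HRHypergraph L where
  V := Finset.Icc 1 (N + 1)
  E := Finset.Icc 1 N
  att := fun e => [e, e + 1]
  lab := fun _ => a
  ext := []

/-- The star grammar `G_n` of Figure `starGrammar1`: terminal alphabet `{a}` of rank 2,
nonterminals `A_0, …, A_{n-1}` of rank 2; the start graph has vertices `{1,2,3}` and
two `A_0`-edges attached to `(1,2)` and `(1,3)`; `rhs A_i` has vertices `{1,2,3}`,
external vertices `(2,3)`, and two edges labeled `A_{i+1}` (labeled `a` for `i = n-1`)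
attached to `(2,3)` and `(2,1)`. -/
def starG (n : ℕ) : HRG Unit (Fin n) where
  rankT := fun _ => 2
  rankN := fun _ => 2
  rhs := fun i =>
    { V := {1, 2, 3}
      E := {1, 2}
      att := fun e => if e = 1 then [2, 3] else [2, 1]
      lab := fun _ => if h : i.val + 1 < n then Sum.inr ⟨i.val + 1, h⟩ else Sum.inl ()
      ext := [2, 3] }
  start :=
    { V := {1, 2, 3}
      E := {1, 2}
      att := fun e => if e = 1 then [1, 2] else [1, 3]
      lab := fun _ => if h : 0 < n then Sum.inr ⟨0, h⟩ else Sum.inl ()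
      ext := [] }


/-!
Appending a row for a child only creates downwards pointers from the old last row to the new
row, and the cells of the new row point upwards: to the parent cell when the attached vertex is
internal to the parent's graph, and otherwise to wherever the parent's corresponding external
column pointed. A pointer of a higher row that targeted an external column of the old last row
passed on to the child is redirected to the new row, where it meets the same upwards pointer as
before. Hence every downwards pointer still ends at an upwards one, `findVertex` is unchanged on
the old rows, and on the new row it follows exactly the recursion defining `InternalRel`.
-/

namespace HRG

theorem WF.nodup_ext_graphOf {σ : Type u} {ν : Type v} {G : HRG σ ν} (hWF : G.WF) :
    ∀ o, (G.graphOf o).ext.Nodup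
  | none => hWF.2.2.2.2.1.2.2.2.2.2.2
  | some A => (hWF.2.2.1 A).2.2.2.2.2.2

variable {σ : Type u} {ν : Type v} [LinearOrder ν] {G : HRG σ ν}

def childGraph (G : HRG σ ν) (g : HRHypergraph (σ ⊕ ν)) (i : ℕ) :
    Option (HRHypergraph (σ ⊕ ν)) :=
  match (ntEdgeList g)[i]? with
  | some e =>
    match g.lab e with
    | Sum.inr B => some (G.rhs B)
    | Sum.inl _ => none
  | none => none

theorem eq_rhs_of_childGraph_eq_some {g gc : HRHypergraph (σ ⊕ ν)} {i : ℕ}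
    (h : childGraph G g i = some gc) :
    ∃ e B, (ntEdgeList g)[i]? = some e ∧ g.lab e = Sum.inr B ∧ gc = G.rhs B := by
  unfold childGraph at h
  split at h
  · rename_i e he
    split at h
    · rename_i B hB
      exact ⟨e, B, he, hB, (Option.some_inj.mp h).symm⟩
    · cases h
  · cases h

theorem graphAt_cons (g : HRHypergraph (σ ⊕ ν)) (i : ℕ) (u : List ℕ) :
    graphAt G g (i :: u) = (childGraph G g i).bind (graphAt G · u) := by
  unfold childGraph
  rw [graphAt]
  split
  · split <;> rfl
  · rfl

theorem graphAt_append (g : HRHypergraph (σ ⊕ ν)) (u w : List ℕ) :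
    graphAt G g (u ++ w) = (graphAt G g u).bind (graphAt G · w) := by
  induction u generalizing g with
  | nil => rfl
  | cons i u ih => simp only [List.cons_append, graphAt_cons, ih, Option.bind_assoc]

theorem graphAt_append_singleton (g : HRHypergraph (σ ⊕ ν)) (u : List ℕ) (l : ℕ) :
    graphAt G g (u ++ [l]) = (graphAt G g u).bind (childGraph G · l) := by
  rw [graphAt_append]
  rfl

theorem ntSeq_isSome_eq_graphAt_isSome (g : HRHypergraph (σ ⊕ ν)) (u : List ℕ) :
    (ntSeq G g u).isSome = (graphAt G g u).isSome := by
  induction u generalizing g with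
  | nil => rfl
  | cons i u ih =>
    unfold ntSeq graphAt
    split
    · split
      · rw [Option.isSome_map, ih]
      · rfl
    · rfl

namespace InternalRel

variable {g0 : HRHypergraph (σ ⊕ ν)} {w v : List ℕ} {y z : ℕ}

theorem isPrefix (h : InternalRel G g0 w y v z) : v <+: w := by
  induction h with
  | refl => exact List.prefix_refl _
  | up _ _ _ _ _ _ ih => exact ih.trans (List.prefix_append _ _)

theorem length_lt_of_mem_ext (h : InternalRel G g0 w y v z) {gw : HRHypergraph (σ ⊕ ν)}
    (hw : graphAt G g0 w = some gw) (hy : y ∈ gw.ext) : v.length < w.length := by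
  cases h with
  | refl hg _ hint =>
    rw [hw, Option.some_inj] at hg
    exact absurd (hg ▸ hy) hint
  | up _ _ _ _ _ hrec =>
    have := hrec.isPrefix.length_le
    simp only [List.length_append, List.length_singleton]
    omega

theorem eq_of_not_mem_ext (h : InternalRel G g0 w y v z) {gw : HRHypergraph (σ ⊕ ν)}
    (hw : graphAt G g0 w = some gw) (hy : y ∉ gw.ext) : v = w ∧ z = y := by
  cases h with
  | refl => exact ⟨rfl, rfl⟩
  | up _ _ hgc hx _ _ =>
    rw [hw, Option.some_inj] at hgc
    subst hgc
    exact absurd (List.mem_of_getElem? hx) hy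

theorem of_append_singleton {u : List ℕ} {l e j : ℕ} {g gc : HRHypergraph (σ ⊕ ν)}
    (h : InternalRel G g0 (u ++ [l]) y v z)
    (hu : graphAt G g0 u = some g) (he : (ntEdgeList g)[l]? = some e)
    (hgc : graphAt G g0 (u ++ [l]) = some gc) (hnd : gc.ext.Nodup) (hj : gc.ext[j]? = some y) :
    ∃ x, (g.att e)[j]? = some x ∧ InternalRel G g0 u x v z := by
  generalize hw : u ++ [l] = w at h
  cases h with
  | refl hg _ hint =>
    subst hw
    rw [hgc, Option.some_inj] at hg
    subst hg
    exact absurd (List.mem_of_getElem? hj) hint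
  | up hg he' hgc' hx hy hrec =>
    obtain ⟨rfl, hl⟩ := List.append_inj' hw.symm rfl
    obtain rfl := List.singleton_inj.mp hl
    obtain rfl := Option.some_inj.mp (hu.symm.trans hg)
    obtain rfl := Option.some_inj.mp (he.symm.trans he')
    obtain rfl := Option.some_inj.mp (hgc.symm.trans hgc')
    obtain rfl := (List.getElem?_inj (List.getElem?_eq_some_iff.mp hj).1 hnd).mp
      (hj.trans hx.symm)
    exact ⟨_, hy, hrec⟩

end InternalRel

end HRG

namespace Tableau

variable {ν : Type v} (t : Tableau ν)

def PointersInside : Prop :=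
  ∀ i j, ∀ p ∈ t.nxt i j, p.1 < t.rows

def DownTargetsUp : Prop :=
  ∀ i j i' j', t.nxt i j = some (i', j') → i < i' → ∀ p ∈ t.nxt i' j', p.1 ≤ i'

variable {t}

theorem findVertex_of_forall_fst_le {i j : ℕ} (h : ∀ p ∈ t.nxt i j, p.1 ≤ i) :
    t.findVertex i j = t.nxt i j := by
  rcases hn : t.nxt i j with _ | ⟨a, b⟩
  · simp only [findVertex, hn]
  · simp only [findVertex, hn, if_pos (show a ≤ i from h _ hn)]

theorem findVertex_of_lt {i j a b : ℕ} (h : t.nxt i j = some (a, b)) (ha : i < a) :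
    t.findVertex i j = t.nxt a b := by
  simp only [findVertex, h, if_neg (Nat.not_le.mpr ha)]

theorem PointersInside.findVertex_last (hin : t.PointersInside) (j : ℕ) :
    t.findVertex (t.rows - 1) j = t.nxt (t.rows - 1) j :=
  findVertex_of_forall_fst_le fun p hp => Nat.le_sub_one_of_lt (hin _ _ p hp)

end Tableau

namespace HRG

section ExtendTab

variable {σ : Type u} {ν : Type v} [LinearOrder ν] (G : HRG σ ν) (iN : ν → ℕ)
  (t : Tableau ν) (l : ℕ)

/- `lastGraph`, `childAtt`, `isExtCol` and `newColOf` are the local definitions `g`, `al`,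
`isExtCol` and `newColOf` of `extendTab`. -/
def lastGraph : HRHypergraph (σ ⊕ ν) :=
  G.graphOf (t.nt (t.rows - 1))

def childAtt : List ℕ :=
  (G.lastGraph t).att ((ntEdgeList (G.lastGraph t)).getD l 0)

def isExtCol (c : ℕ) : Bool :=
  match (G.lastGraph t).ext[c]? with
  | some x => decide (x ∈ G.childAtt t l)
  | none => false

def newColOf (c : ℕ) : ℕ :=
  match (G.lastGraph t).ext[c]? with
  | some x => List.idxOf x (G.childAtt t l)
  | none => 0

/-- The target that `extendTab` gives to a pointer of a row above the last one. -/
def redirect (p : ℕ × ℕ) : ℕ × ℕ :=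
  if p.1 = t.rows - 1 ∧ G.isExtCol t l p.2 then (t.rows, G.newColOf t l p.2) else p

theorem rows_extendTab : (G.extendTab iN t l).rows = t.rows + 1 := rfl

theorem nt_extendTab_newRow {B : ν}
    (hB : (G.lastGraph t).lab ((ntEdgeList (G.lastGraph t)).getD l 0) = Sum.inr B) :
    (G.extendTab iN t l).nt t.rows = some B := by
  simp only [extendTab, lastGraph] at hB ⊢
  rw [if_pos trivial, hB]

theorem nxt_extendTab_newRow (j : ℕ) :
    (G.extendTab iN t l).nxt t.rows j =
      if j < (G.childAtt t l).length then
        (if (G.childAtt t l).getD j 0 ∈ (G.lastGraph t).ext then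
          t.nxt (t.rows - 1) (List.idxOf ((G.childAtt t l).getD j 0) (G.lastGraph t).ext)
        else some (t.rows - 1, j))
      else none :=
  if_pos rfl

theorem nxt_extendTab_lastRow (h : t.rows ≠ 0) (j : ℕ) :
    (G.extendTab iN t l).nxt (t.rows - 1) j =
      if G.isExtCol t l j then some (t.rows, G.newColOf t l j) else t.nxt (t.rows - 1) j := by
  simp only [extendTab]
  rw [if_neg (by omega), if_pos trivial]
  rfl

theorem nxt_extendTab_of_ne {i : ℕ} (h₁ : i ≠ t.rows) (h₂ : i ≠ t.rows - 1) (j : ℕ) :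
    (G.extendTab iN t l).nxt i j = (t.nxt i j).map (G.redirect t l) := by
  simp only [extendTab]
  rw [if_neg h₁, if_neg h₂]
  rcases t.nxt i j with _ | ⟨a, b⟩
  · rfl
  · exact (apply_ite some _ _ _).symm

theorem vtx_extendTab_of_lt {i : ℕ} (hi : i < t.rows - 1) (j : ℕ) :
    (G.extendTab iN t l).vtx i j = t.vtx i j := by
  simp only [extendTab]
  rw [if_neg (by omega), if_neg (by omega)]

theorem vtx_extendTab_lastRow (h : t.rows ≠ 0) {j x : ℕ} (hx : (G.childAtt t l)[j]? = some x)
    (hxe : x ∉ (G.lastGraph t).ext) :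
    (G.extendTab iN t l).vtx (t.rows - 1) j = x := by
  have hj := (List.getElem?_eq_some_iff.mp hx).1
  have hget : (G.childAtt t l).getD j 0 = x := by rw [List.getD_eq_getElem?_getD, hx]; rfl
  simp only [extendTab]
  rw [if_neg (by omega), if_pos ⟨trivial, hj, hget ▸ hxe⟩]
  exact hget

variable {G t l}

theorem nxt_extendTab_newRow_of_mem {j x : ℕ} (hx : (G.childAtt t l)[j]? = some x)
    (hxe : x ∈ (G.lastGraph t).ext) :
    (G.extendTab iN t l).nxt t.rows j = t.nxt (t.rows - 1) (List.idxOf x (G.lastGraph t).ext) := by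
  have hget : (G.childAtt t l).getD j 0 = x := by rw [List.getD_eq_getElem?_getD, hx]; rfl
  rw [nxt_extendTab_newRow, if_pos (List.getElem?_eq_some_iff.mp hx).1, hget, if_pos hxe]

theorem nxt_extendTab_newRow_of_not_mem {j x : ℕ} (hx : (G.childAtt t l)[j]? = some x)
    (hxe : x ∉ (G.lastGraph t).ext) :
    (G.extendTab iN t l).nxt t.rows j = some (t.rows - 1, j) := by
  have hget : (G.childAtt t l).getD j 0 = x := by rw [List.getD_eq_getElem?_getD, hx]; rfl
  rw [nxt_extendTab_newRow, if_pos (List.getElem?_eq_some_iff.mp hx).1, hget, if_neg hxe]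

theorem fst_lt_of_mem_nxt_extendTab_newRow (hin : t.PointersInside) (h0 : t.rows ≠ 0)
    {j : ℕ} {p : ℕ × ℕ} (hp : p ∈ (G.extendTab iN t l).nxt t.rows j) : p.1 < t.rows := by
  rw [nxt_extendTab_newRow] at hp
  split_ifs at hp
  · exact hin _ _ p hp
  · obtain rfl := Option.some_inj.mp hp
    omega
  · cases hp

theorem nxt_extendTab_newColOf (hnd : (G.lastGraph t).ext.Nodup) {c : ℕ}
    (hc : G.isExtCol t l c) :
    (G.extendTab iN t l).nxt t.rows (G.newColOf t l c) = t.nxt (t.rows - 1) c := by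
  unfold isExtCol at hc
  unfold newColOf
  rcases hx : (G.lastGraph t).ext[c]? with _ | x
  · simp [hx] at hc
  · simp only [hx, decide_eq_true_eq] at hc ⊢
    obtain ⟨hc', rfl⟩ := List.getElem?_eq_some_iff.mp hx
    rw [nxt_extendTab_newRow_of_mem iN (List.getElem?_idxOf hc) (List.getElem_mem hc'),
      hnd.idxOf_getElem c hc']

theorem redirect_of_ne {p : ℕ × ℕ} (h : p.1 ≠ t.rows - 1) : G.redirect t l p = p :=
  if_neg fun h' => h h'.1

theorem redirect_fst (p : ℕ × ℕ) :
    (G.redirect t l p).1 = p.1 ∨ (G.redirect t l p).1 = t.rows := by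
  unfold redirect
  split_ifs <;> simp

theorem redirect_of_isExtCol {b : ℕ} (hc : G.isExtCol t l b) :
    G.redirect t l (t.rows - 1, b) = (t.rows, G.newColOf t l b) :=
  if_pos ⟨rfl, hc⟩

theorem redirect_of_not_isExtCol {b : ℕ} (hc : ¬G.isExtCol t l b) :
    G.redirect t l (t.rows - 1, b) = (t.rows - 1, b) :=
  if_neg fun h => hc h.2

theorem fst_le_of_redirect_eq {p q : ℕ × ℕ} (hr : G.redirect t l p = q) : p.1 ≤ q.1 := by
  subst hr
  unfold redirect
  split_ifs with h
  · exact h.1 ▸ Nat.sub_le _ _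
  · exact le_rfl

theorem nxt_extendTab_of_redirect_eq (hnd : (G.lastGraph t).ext.Nodup) {a b a' b' : ℕ}
    (ha : a < t.rows) (hup : ∀ p ∈ t.nxt a b, p.1 ≤ a)
    (hr : G.redirect t l (a, b) = (a', b')) :
    (G.extendTab iN t l).nxt a' b' = t.nxt a b := by
  rcases (show a = t.rows - 1 ∨ a < t.rows - 1 by omega) with rfl | ha'
  · by_cases hc : G.isExtCol t l b
    · obtain ⟨rfl, rfl⟩ := Prod.mk.inj ((redirect_of_isExtCol hc).symm.trans hr)
      exact nxt_extendTab_newColOf iN hnd hc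
    · obtain ⟨rfl, rfl⟩ := Prod.mk.inj ((redirect_of_not_isExtCol hc).symm.trans hr)
      rw [nxt_extendTab_lastRow G iN t l (by omega), if_neg hc]
  · obtain ⟨rfl, rfl⟩ := Prod.mk.inj ((redirect_of_ne ha'.ne).symm.trans hr)
    rw [nxt_extendTab_of_ne G iN t l (by omega) ha'.ne]
    rcases hn : t.nxt a b with _ | p
    · rfl
    · rw [Option.map_some, redirect_of_ne (by have := hup p hn; omega)]

theorem pointersInside_extendTab (hin : t.PointersInside) (h0 : t.rows ≠ 0) :
    (G.extendTab iN t l).PointersInside := by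
  intro i j p hp
  rw [rows_extendTab]
  rcases (show i = t.rows ∨ i = t.rows - 1 ∨ (i ≠ t.rows ∧ i ≠ t.rows - 1) by omega)
    with rfl | rfl | ⟨h₁, h₂⟩
  · exact Nat.lt_succ_of_lt (fst_lt_of_mem_nxt_extendTab_newRow iN hin h0 hp)
  · rw [nxt_extendTab_lastRow G iN t l h0] at hp
    split_ifs at hp
    · obtain rfl := Option.some_inj.mp hp
      exact Nat.lt_succ_self _
    · exact Nat.lt_succ_of_lt (hin _ _ p hp)
  · rw [nxt_extendTab_of_ne G iN t l h₁ h₂, Option.mem_map] at hp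
    obtain ⟨q, hq, rfl⟩ := hp
    rcases redirect_fst (G := G) (l := l) q with h | h <;> rw [h]
    · exact Nat.lt_succ_of_lt (hin _ _ q hq)
    · exact Nat.lt_succ_self _

theorem downTargetsUp_extendTab (hnd : (G.lastGraph t).ext.Nodup) (hin : t.PointersInside)
    (hdu : t.DownTargetsUp) (h0 : t.rows ≠ 0) : (G.extendTab iN t l).DownTargetsUp := by
  intro i j i' j' hp hii' q hq
  have hi' : i' < t.rows + 1 := (pointersInside_extendTab iN hin h0) i j _ hp
  rcases (show i = t.rows ∨ i = t.rows - 1 ∨ i < t.rows - 1 by omega) with rfl | rfl | hi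
  · exact absurd (fst_lt_of_mem_nxt_extendTab_newRow iN hin h0 hp) (by omega)
  · rw [nxt_extendTab_lastRow G iN t l h0] at hp
    split_ifs at hp with hc
    · obtain ⟨rfl, rfl⟩ := Prod.mk.inj (Option.some_inj.mp hp)
      rw [nxt_extendTab_newColOf iN hnd hc] at hq
      exact (hin _ _ q hq).le
    · exact absurd (hin _ _ _ hp) (by omega)
  · rw [nxt_extendTab_of_ne G iN t l (by omega) (by omega)] at hp
    obtain ⟨⟨a, b⟩, hab, hred⟩ := Option.map_eq_some_iff.mp hp
    have hia : i < a := by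
      by_contra hai
      rw [redirect_of_ne (by change a ≠ _; omega)] at hred
      obtain ⟨rfl, rfl⟩ := Prod.mk.inj hred
      omega
    rw [nxt_extendTab_of_redirect_eq iN hnd (hin _ _ _ hab) (hdu i j a b hab hia) hred] at hq
    exact (hdu i j a b hab hia q hq).trans (fst_le_of_redirect_eq hred)

theorem findVertex_extendTab_of_lt (hnd : (G.lastGraph t).ext.Nodup) (hin : t.PointersInside)
    (hdu : t.DownTargetsUp) {i : ℕ} (hi : i < t.rows) (j : ℕ) :
    (G.extendTab iN t l).findVertex i j = t.findVertex i j := by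
  have h0 : t.rows ≠ 0 := by omega
  rcases (show i = t.rows - 1 ∨ i < t.rows - 1 by omega) with rfl | hi'
  · rw [hin.findVertex_last]
    by_cases hc : G.isExtCol t l j
    · have hn : (G.extendTab iN t l).nxt (t.rows - 1) j = some (t.rows, G.newColOf t l j) := by
        rw [nxt_extendTab_lastRow G iN t l h0, if_pos hc]
      rw [Tableau.findVertex_of_lt hn (by omega), nxt_extendTab_newColOf iN hnd hc]
    · have hn : (G.extendTab iN t l).nxt (t.rows - 1) j = t.nxt (t.rows - 1) j := by
        rw [nxt_extendTab_lastRow G iN t l h0, if_neg hc]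
      rw [Tableau.findVertex_of_forall_fst_le
        (by rw [hn]; exact fun p hp => Nat.le_sub_one_of_lt (hin _ _ p hp)), hn]
  · have hn := nxt_extendTab_of_ne G iN t l (i := i) (by omega) (by omega) j
    rcases ht : t.nxt i j with _ | ⟨a, b⟩
    · simp only [Tableau.findVertex, hn, ht, Option.map_none]
    · rw [ht, Option.map_some] at hn
      rcases le_or_gt a i with hai | hia
      · rw [redirect_of_ne (by change a ≠ _; omega)] at hn
        simp only [Tableau.findVertex, hn, ht, if_pos hai]
      · rcases hr : G.redirect t l (a, b) with ⟨a', b'⟩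
        have haa' : a ≤ a' := fst_le_of_redirect_eq hr
        rw [hr] at hn
        rw [Tableau.findVertex_of_lt ht hia, Tableau.findVertex_of_lt hn (by omega),
          nxt_extendTab_of_redirect_eq iN hnd (hin _ _ _ ht) (hdu i j a b ht hia) hr]

theorem findVertex_extendTab_newRow_of_mem (hin : t.PointersInside) (h0 : t.rows ≠ 0)
    {j x : ℕ} (hx : (G.childAtt t l)[j]? = some x) (hxe : x ∈ (G.lastGraph t).ext) :
    (G.extendTab iN t l).findVertex t.rows j =
      t.findVertex (t.rows - 1) (List.idxOf x (G.lastGraph t).ext) := by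
  rw [Tableau.findVertex_of_forall_fst_le
      (fun p hp => (fst_lt_of_mem_nxt_extendTab_newRow iN hin h0 hp).le),
    nxt_extendTab_newRow_of_mem iN hx hxe, hin.findVertex_last]

theorem findVertex_extendTab_newRow_of_not_mem {j x : ℕ} (hx : (G.childAtt t l)[j]? = some x)
    (hxe : x ∉ (G.lastGraph t).ext) :
    (G.extendTab iN t l).findVertex t.rows j = some (t.rows - 1, j) := by
  have hn := nxt_extendTab_newRow_of_not_mem iN hx hxe
  rw [Tableau.findVertex_of_forall_fst_le (by rw [hn]; simp), hn]

end ExtendTab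

variable {σ : Type u} {ν : Type v} [LinearOrder ν] {G : HRG σ ν}

def FindsInternalVertices (G : HRG σ ν) (root : Option ν) (u : List ℕ) (t : Tableau ν)
    (i : ℕ) : Prop :=
  ∀ gi, graphAt G (G.graphOf root) (u.take i) = some gi → ∀ j y, gi.ext[j]? = some y →
    ∀ v z, InternalRel G (G.graphOf root) (u.take i) y v z →
      ∃ j', t.findVertex i j = some (v.length, j') ∧ t.vtx v.length j' = z

structure IsPathTableau (G : HRG σ ν) (root : Option ν) (u : List ℕ) (t : Tableau ν) :
    Prop where
  rows_eq : t.rows = u.length + 1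
  graphAt_eq : graphAt G (G.graphOf root) u = some (G.lastGraph t)
  pointersInside : t.PointersInside
  downTargetsUp : t.DownTargetsUp
  findsInternalVertices : ∀ i < t.rows, FindsInternalVertices G root u t i

theorem isPathTableau_initTab (root : Option ν) (κ : ℕ) :
    IsPathTableau G root [] (initTab G root κ) where
  rows_eq := rfl
  graphAt_eq := rfl
  pointersInside i j p hp := by
    simp only [initTab] at hp
    split_ifs at hp
    · obtain rfl := Option.some_inj.mp hp
      exact Nat.zero_lt_one
    · cases hp
  downTargetsUp i j i' j' hp hlt := by
    simp only [initTab] at hp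
    split_ifs at hp
    obtain ⟨rfl, rfl⟩ := Prod.mk.inj (Option.some_inj.mp hp)
    omega
  findsInternalVertices i _ gi hgi j y hy v z hrel := by
    rw [List.take_nil] at hgi hrel
    exact absurd (hrel.length_lt_of_mem_ext hgi (List.mem_of_getElem? hy)) (Nat.not_lt_zero _)

namespace IsPathTableau

variable {root : Option ν} {u : List ℕ} {t : Tableau ν} (iN : ν → ℕ) (l : ℕ)

theorem findsInternalVertices_extendTab_of_lt (hnd : ∀ o, (G.graphOf o).ext.Nodup)
    (hI : IsPathTableau G root u t) {i : ℕ} (hi : i < t.rows) :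
    FindsInternalVertices G root (u ++ [l]) (G.extendTab iN t l) i := by
  have hiu : i ≤ u.length := by have := hI.rows_eq; omega
  intro gi hgi j y hy v z hrel
  rw [List.take_append_of_le_length hiu] at hgi hrel
  obtain ⟨j', hfv, hvtx⟩ := hI.findsInternalVertices i hi gi hgi j y hy v z hrel
  have hv : v.length < i := by
    simpa [List.length_take, hiu] using hrel.length_lt_of_mem_ext hgi (List.mem_of_getElem? hy)
  refine ⟨j', ?_, ?_⟩
  · rw [findVertex_extendTab_of_lt iN (hnd _) hI.pointersInside hI.downTargetsUp hi]
    exact hfv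
  · rw [vtx_extendTab_of_lt G iN t l (by omega)]
    exact hvtx

theorem findsInternalVertices_extendTab_newRow (hnd : ∀ o, (G.graphOf o).ext.Nodup)
    (hI : IsPathTableau G root u t) {e : ℕ} {B : ν}
    (he : (ntEdgeList (G.lastGraph t))[l]? = some e) (hB : (G.lastGraph t).lab e = Sum.inr B) :
    FindsInternalVertices G root (u ++ [l]) (G.extendTab iN t l) t.rows := by
  have hu : t.rows - 1 = u.length := by have := hI.rows_eq; omega
  have h0 : t.rows ≠ 0 := by have := hI.rows_eq; omega
  have hprev : u.take (t.rows - 1) = u := by rw [hu, List.take_length]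
  have hgc : graphAt G (G.graphOf root) (u ++ [l]) = some (G.rhs B) := by
    simp [graphAt_append_singleton, hI.graphAt_eq, childGraph, he, hB]
  have hatt : G.childAtt t l = (G.lastGraph t).att e := by
    simp [childAtt, List.getD_eq_getElem?_getD, he]
  intro gi hgi j y hy v z hrel
  rw [List.take_of_length_le (by simp [hI.rows_eq])] at hgi hrel
  obtain rfl := Option.some_inj.mp (hgi.symm.trans hgc)
  obtain ⟨x, hx, hxrel⟩ := hrel.of_append_singleton hI.graphAt_eq he hgc (hnd (some B)) hy
  rw [← hatt] at hx
  by_cases hxe : x ∈ (G.lastGraph t).ext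
  · obtain ⟨j', hfv, hvtx⟩ := hI.findsInternalVertices (t.rows - 1) (by omega) _
      (by rw [hprev]; exact hI.graphAt_eq) _ x (List.getElem?_idxOf hxe) v z
      (by rw [hprev]; exact hxrel)
    have hv : v.length < t.rows - 1 := hu ▸ hxrel.length_lt_of_mem_ext hI.graphAt_eq hxe
    refine ⟨j', ?_, ?_⟩
    · rw [findVertex_extendTab_newRow_of_mem iN hI.pointersInside h0 hx hxe]
      exact hfv
    · rw [vtx_extendTab_of_lt G iN t l hv]
      exact hvtx
  · obtain ⟨rfl, rfl⟩ := hxrel.eq_of_not_mem_ext hI.graphAt_eq hxe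
    refine ⟨j, ?_, ?_⟩
    · rw [findVertex_extendTab_newRow_of_not_mem iN hx hxe, hu]
    · rw [← hu, vtx_extendTab_lastRow G iN t l h0 hx hxe]

theorem extendTab (hnd : ∀ o, (G.graphOf o).ext.Nodup) (hI : IsPathTableau G root u t)
    (hu : (graphAt G (G.graphOf root) (u ++ [l])).isSome) :
    IsPathTableau G root (u ++ [l]) (G.extendTab iN t l) := by
  have h0 : t.rows ≠ 0 := by have := hI.rows_eq; omega
  obtain ⟨gc, hgc⟩ := Option.isSome_iff_exists.mp hu
  rw [graphAt_append_singleton, hI.graphAt_eq, Option.bind_some] at hgc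
  obtain ⟨e, B, he, hB, rfl⟩ := eq_rhs_of_childGraph_eq_some hgc
  have hlast : G.lastGraph (G.extendTab iN t l) = G.rhs B := by
    have hB' : (G.lastGraph t).lab ((ntEdgeList (G.lastGraph t)).getD l 0) = Sum.inr B := by
      simpa [List.getD_eq_getElem?_getD, he] using hB
    rw [lastGraph, rows_extendTab, Nat.add_sub_cancel, nt_extendTab_newRow G iN t l hB']
    rfl
  refine ⟨?_, ?_, pointersInside_extendTab iN hI.pointersInside h0,
    downTargetsUp_extendTab iN (hnd _) hI.pointersInside hI.downTargetsUp h0, ?_⟩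
  · rw [rows_extendTab, hI.rows_eq, List.length_append, List.length_singleton]
  · rw [hlast, graphAt_append_singleton, hI.graphAt_eq, Option.bind_some, hgc]
  · intro i hi
    rcases Nat.lt_or_ge i t.rows with hi' | hi'
    · exact findsInternalVertices_extendTab_of_lt iN l hnd hI hi'
    · obtain rfl : i = t.rows := by rw [rows_extendTab] at hi; omega
      exact findsInternalVertices_extendTab_newRow iN l hnd hI he hB

end IsPathTableau

theorem isPathTableau_createTableau (hnd : ∀ o, (G.graphOf o).ext.Nodup) (iN : ν → ℕ)
    (κ : ℕ) (root : Option ν) {u : List ℕ} (hu : (graphAt G (G.graphOf root) u).isSome) :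
    IsPathTableau G root u (createTableau G iN κ root u) := by
  induction u using List.reverseRecOn with
  | nil => exact isPathTableau_initTab root κ
  | append_singleton u l ih =>
    have hu' : (graphAt G (G.graphOf root) u).isSome := by
      rw [graphAt_append_singleton] at hu
      exact Option.isSome_of_isSome_bind hu
    rw [createTableau, List.foldl_append]
    exact (ih hu').extendTab iN l hnd hu

end HRG

section Statements

open HRHypergraph HRG

theorem stmt17_general {σ ν : Type} [LinearOrder ν] (G : HRG σ ν) (hWF : G.WF)
    (val : ν → HRHypergraph (σ ⊕ ν))
    (κ : ℕ)
    (root : Option ν) (u : List ℕ)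
    (hvalid : (ntSeq G (G.graphOf root) u).isSome = true) :
    (∀ i j i' j' : ℕ,
      (createTableau G (iNodes val) κ root u).nxt i j = some (i', j') → i < i' →
      ∀ p ∈ (createTableau G (iNodes val) κ root u).nxt i' j', p.1 ≤ i') ∧
    (∀ i : ℕ, i < (createTableau G (iNodes val) κ root u).rows →
      ∀ gi, graphAt G (G.graphOf root) (u.take i) = some gi →
      ∀ (j y : ℕ), gi.ext[j]? = some y →
      ∀ (v : List ℕ) (z : ℕ), InternalRel G (G.graphOf root) (u.take i) y v z →
        ∃ j' : ℕ,
          (createTableau G (iNodes val) κ root u).findVertex i j = some (v.length, j') ∧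
          (createTableau G (iNodes val) κ root u).vtx v.length j' = z) := by
  rw [ntSeq_isSome_eq_graphAt_isSome] at hvalid
  have hI := isPathTableau_createTableau hWF.nodup_ext_graphOf (iNodes val) κ root hvalid
  exact ⟨hI.downTargetsUp, hI.findsInternalVertices⟩

theorem stmt17 {σ ν : Type} [LinearOrder ν] (G : HRG σ ν) (hWF : G.WF) (hSL : G.SL)
    (val : ν → HRHypergraph (σ ⊕ ν)) (hval : G.ValFamily val)
    (κ : ℕ) (hκ : ∀ B : ν, G.rankN B ≤ κ)
    (root : Option ν) (u : List ℕ)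
    (hvalid : (ntSeq G (G.graphOf root) u).isSome = true) :
    (∀ i j i' j' : ℕ,
      (createTableau G (iNodes val) κ root u).nxt i j = some (i', j') → i < i' →
      ∀ p ∈ (createTableau G (iNodes val) κ root u).nxt i' j', p.1 ≤ i') ∧
    (∀ i : ℕ, i < (createTableau G (iNodes val) κ root u).rows →
      ∀ gi, graphAt G (G.graphOf root) (u.take i) = some gi →
      ∀ (j y : ℕ), gi.ext[j]? = some y →
      ∀ (v : List ℕ) (z : ℕ), InternalRel G (G.graphOf root) (u.take i) y v z →
        ∃ j' : ℕ,
          (createTableau G (iNodes val) κ root u).findVertex i j = some (v.length, j') ∧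
          (createTableau G (iNodes val) κ root u).vtx v.length j' = z) :=
  stmt17_general G hWF val κ root u hvalid

end Statements
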